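/- arXiv:2107.04111 — 2 statements merged into one kernel-verified Lean document; each statement's English description precedes it below -/
import Mathlib

section
/- Let p be a prime, K a field of characteristic p, and V a K-vector space. Let φ : V → V be a Frobenius-semilinear map, i.e., φ is additive and φ(a·v) = aᵖ·φ(v) for all a ∈ K and v ∈ V. Then any family of vectors in V^{φ=1} = {v ∈ V : φ(v) = v} that is linearly independent over the prime field F_p is linearly independent over K. Equivalently, the natural K-linear map V^{φ=1} ⊗_{F_p} K → V, given by v ⊗ a ↦ a·v, is injective. -/
open Polynomial in
lemma aux_pow_eq_mem {p : ℕ} [Fact p.Prime]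
    {K : Type*} [Field K] [CharP K p] [Algebra (ZMod p) K]
    (a : K) (h : a ^ p = a) : ∃ c : ZMod p, algebraMap (ZMod p) K c = a := by
  classical
  have hp1 : 1 < p := (Fact.out : p.Prime).one_lt
  set f : K[X] := X ^ p - X with hf
  have hf0 : f ≠ 0 := FiniteField.X_pow_card_sub_X_ne_zero K hp1
  have hdeg : f.natDegree = p := FiniteField.X_pow_card_sub_X_natDegree_eq K hp1
  have hinj : Function.Injective (algebraMap (ZMod p) K) := (algebraMap (ZMod p) K).injective
  have hsub : (Finset.univ.image (algebraMap (ZMod p) K)) ⊆ f.roots.toFinset := by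
    intro x hx
    simp only [Finset.mem_image] at hx
    obtain ⟨c, -, rfl⟩ := hx
    rw [Multiset.mem_toFinset, mem_roots hf0]
    have : (algebraMap (ZMod p) K c) ^ p = algebraMap (ZMod p) K c := by
      rw [← map_pow, ZMod.pow_card]
    simp [f, IsRoot, this]
  have hcard1 : (Finset.univ.image (algebraMap (ZMod p) K)).card = p := by
    rw [Finset.card_image_of_injective _ hinj, Finset.card_univ, ZMod.card]
  have hcard2 : f.roots.toFinset.card ≤ p := by
    calc f.roots.toFinset.card ≤ Multiset.card f.roots := f.roots.toFinset_card_le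
    _ ≤ f.natDegree := f.card_roots'
    _ = p := hdeg
  have heq : Finset.univ.image (algebraMap (ZMod p) K) = f.roots.toFinset :=
    Finset.eq_of_subset_of_card_le hsub (by omega)
  have ha : a ∈ f.roots.toFinset := by
    rw [Multiset.mem_toFinset, mem_roots hf0]
    simp [f, IsRoot, h]
  rw [← heq] at ha
  simp only [Finset.mem_image] at ha
  obtain ⟨c, -, hc⟩ := ha
  exact ⟨c, hc⟩

/-- Let `p` be a prime, `K` a field of characteristic `p`, `V` a `K`-vector
space and `φ : V → V` a Frobenius-semilinear map.  Then any family of `φ`-fixed vectors that is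
linearly independent over the prime field `𝔽ₚ = ZMod p` is linearly independent over `K`.
(The `ZMod p`-module structures on `K` and `V` are the canonical ones; they are uniquely
determined by the `Algebra`/`IsScalarTower` assumptions.) -/
theorem linearIndependent_of_frobenius_fixed
    {p : ℕ} [Fact p.Prime]
    {K : Type*} [Field K] [CharP K p] [Algebra (ZMod p) K]
    {V : Type*} [AddCommGroup V] [Module K V]
    [Module (ZMod p) V] [IsScalarTower (ZMod p) K V]
    (φ : V → V)
    (hadd : ∀ x y : V, φ (x + y) = φ x + φ y)
    (hsmul : ∀ (a : K) (v : V), φ (a • v) = a ^ p • φ v)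
    {ι : Type*} (v : ι → V)
    (hfix : ∀ i, φ (v i) = v i)
    (hli : LinearIndependent (ZMod p) v) :
    LinearIndependent K v := by
  classical
  have hp0 : p ≠ 0 := (Fact.out : p.Prime).ne_zero
  have hzero : φ 0 = 0 := by
    have h := hadd 0 0
    rw [add_zero] at h
    exact (left_eq_add.mp h)
  let Φ : V →+ V := AddMonoidHom.mk' φ hadd
  rw [linearIndependent_iff]
  suffices H : ∀ n (l : ι →₀ K), l.support.card = n →
      Finsupp.linearCombination K v l = 0 → l = 0 by
    exact fun l hl => H _ l rfl hl
  intro n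
  induction n using Nat.strong_induction_on with
  | _ n ih =>
  intro l hcard hl
  by_contra hne
  obtain ⟨j, hj⟩ : ∃ j, l j ≠ 0 := by
    by_contra h
    push_neg at h
    exact hne (Finsupp.ext h)
  have hcinv : (l j)⁻¹ ≠ 0 := inv_ne_zero hj
  set l' : ι →₀ K := (l j)⁻¹ • l with hl'def
  have hl'j : l' j = 1 := by
    simp [hl'def, Finsupp.smul_apply, inv_mul_cancel₀ hj]
  have hsupp' : l'.support = l.support := Finsupp.support_smul_eq hcinv
  have hl' : Finsupp.linearCombination K v l' = 0 := by
    rw [hl'def, map_smul, hl, smul_zero]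
  -- apply φ
  set l'' : ι →₀ K := Finsupp.mapRange (· ^ p) (zero_pow hp0) l' with hl''def
  have hl'' : Finsupp.linearCombination K v l'' = 0 := by
    have h1 : Φ (Finsupp.linearCombination K v l') = 0 := by rw [hl']; exact hzero
    rw [Finsupp.linearCombination_apply, map_finsuppSum] at h1
    rw [Finsupp.linearCombination_apply, hl''def,
      Finsupp.sum_mapRange_index (fun i => zero_smul K (v i))]
    rw [← h1]
    apply Finsupp.sum_congr
    intro i _
    show (l' i) ^ p • v i = φ (l' i • v i)
    rw [hsmul, hfix]
  -- the difference has smaller support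
  set d : ι →₀ K := l'' - l' with hd
  have hdl : Finsupp.linearCombination K v d = 0 := by
    rw [hd, map_sub, hl'', hl', sub_zero]
  have hdj : d j = 0 := by
    simp [hd, hl''def, Finsupp.mapRange_apply, hl'j, one_pow]
  have hdsupp : d.support ⊆ l.support.erase j := by
    intro i hi
    rw [Finset.mem_erase]
    constructor
    · rintro rfl; exact Finsupp.mem_support_iff.mp hi hdj
    · have := Finsupp.support_sub hi
      rw [Finset.mem_union] at this
      rcases this with h | h
      · have := Finsupp.support_mapRange h
        rwa [hsupp'] at this
      · rwa [hsupp'] at h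
  have hjs : j ∈ l.support := Finsupp.mem_support_iff.mpr hj
  have hdcard : d.support.card < n := by
    calc d.support.card ≤ (l.support.erase j).card := Finset.card_le_card hdsupp
    _ < l.support.card := Finset.card_erase_lt_of_mem hjs
    _ = n := hcard
  have hd0 : d = 0 := ih _ hdcard d rfl hdl
  -- so all coefficients of l' are fixed by Frobenius
  have hfixcoef : ∀ i, (l' i) ^ p = l' i := by
    intro i
    have : d i = 0 := by rw [hd0]; rfl
    rw [hd, Finsupp.sub_apply, sub_eq_zero] at this
    simpa [hl''def, Finsupp.mapRange_apply] using this
  -- choose preimages in ZMod p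
  have hex : ∀ i, ∃ c : ZMod p, algebraMap (ZMod p) K c = l' i :=
    fun i => aux_pow_eq_mem (l' i) (hfixcoef i)
  set g : ι → ZMod p := fun i => (hex i).choose with hg
  have hgspec : ∀ i, algebraMap (ZMod p) K (g i) = l' i := fun i => (hex i).choose_spec
  have hinj : Function.Injective (algebraMap (ZMod p) K) := (algebraMap (ZMod p) K).injective
  set m : ι →₀ ZMod p := Finsupp.onFinset l'.support g (by
    intro i hi
    rw [Finsupp.mem_support_iff]
    intro h0
    apply hi
    apply hinj
    rw [hgspec i, h0, map_zero]) with hm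
  have hmcomb : Finsupp.linearCombination (ZMod p) v m = 0 := by
    rw [Finsupp.linearCombination_apply,
      Finsupp.onFinset_sum _ (fun i => zero_smul (ZMod p) (v i))]
    have : ∀ i ∈ l'.support, g i • v i = l' i • v i := by
      intro i _
      rw [← hgspec i, algebraMap_smul]
    rw [Finset.sum_congr rfl this]
    rw [Finsupp.linearCombination_apply, Finsupp.sum] at hl'
    exact hl'
  have hm0 : m = 0 := linearIndependent_iff.mp hli m hmcomb
  have : g j = 0 := by
    have := Finsupp.ext_iff.mp hm0 j
    simpa [hm] using this
  have : l' j = 0 := by rw [← hgspec j, this, map_zero]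
  rw [hl'j] at this
  exact one_ne_zero this
end

section
/- Let p be a prime, k a field of characteristic p, R = k⟦u⟧ the power series ring over k, and Ω a field of characteristic p containing the Laurent series field k((u)) as a subfield. Let M be a finitely generated R-module, set V = M ⊗_{R} Ω (an Ω-vector space), and let ψ : V → V be any Frobenius-semilinear map, i.e., ψ is additive and ψ(a·v) = aᵖ·ψ(v) for all a ∈ Ω, v ∈ V. Then the fixed points form a finite-dimensional F_p-vector space with dim_{F_p} V^{ψ=1} ≤ dim_k (M/uM). -/
/-!
Fixed vectors of a Frobenius-semilinear `ψ` that are independent over `𝔽ₚ` stay independent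
over `Ω`: normalising a relation of minimal support and subtracting its image under `ψ` leaves a
shorter relation with coefficients `aᵖ - a`, which must vanish; so every coefficient lies in
`𝔽ₚ`, contradicting independence over `𝔽ₚ`. Hence `dim_{𝔽ₚ} V^{ψ=1} ≤ dim_Ω V`. By Nakayama over the local ring `k⟦u⟧`, lifts of a
`k`-basis of `M/uM` generate `M`, and their images span `V` over `Ω`, so `dim_Ω V ≤ dim_k M/uM`.
-/

open Pointwise

/-- The fixed points `V^{ψ=1}` of a Frobenius-semilinear map `ψ` on a vector space `V` over a
field `Ω` of characteristic `p`, as a `ZMod p`-submodule of `V`. -/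
def frobeniusFixedPoints
    {p : ℕ} [Fact p.Prime]
    {Ω : Type*} [Field Ω] [CharP Ω p] [Algebra (ZMod p) Ω]
    {V : Type*} [AddCommGroup V] [Module Ω V]
    [Module (ZMod p) V] [IsScalarTower (ZMod p) Ω V]
    (ψ : V → V)
    (hadd : ∀ x y : V, ψ (x + y) = ψ x + ψ y)
    (hsmul : ∀ (a : Ω) (v : V), ψ (a • v) = a ^ p • ψ v) :
    Submodule (ZMod p) V where
  carrier := {v | ψ v = v}
  add_mem' := by
    intro a b ha hb
    simp only [Set.mem_setOf_eq] at *
    rw [hadd, ha, hb]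
  zero_mem' := by
    have h0 : ψ 0 = ψ ((0 : Ω) • (0 : V)) := by rw [zero_smul]
    have h1 : ψ ((0 : Ω) • (0 : V)) = (0 : Ω) ^ p • ψ 0 := hsmul 0 0
    simp only [Set.mem_setOf_eq]
    rw [h0, h1, zero_pow (Fact.out : p.Prime).ne_zero, zero_smul]
  smul_mem' := by
    intro z v hv
    simp only [Set.mem_setOf_eq] at *
    have h1 : z • v = (algebraMap (ZMod p) Ω z) • v :=
      (IsScalarTower.algebraMap_smul Ω z v).symm
    rw [h1, hsmul, ← map_pow, ZMod.pow_card, hv]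

theorem exists_algebraMap_eq_of_pow_eq_self {p : ℕ} [Fact p.Prime] {Ω : Type*} [Field Ω]
    [CharP Ω p] [Algebra (ZMod p) Ω] {a : Ω} (ha : a ^ p = a) :
    ∃ z : ZMod p, algebraMap (ZMod p) Ω z = a :=
  bot_le (a := (algebraMap (ZMod p) Ω).fieldRange) ((Subfield.mem_bot_iff_pow_eq_self Ω p).2 ha)

theorem LinearIndependent.of_frobenius_fixed {p : ℕ} [Fact p.Prime] {Ω V ι : Type*} [Field Ω]
    [CharP Ω p] [Algebra (ZMod p) Ω] [AddCommGroup V] [Module Ω V] [Module (ZMod p) V]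
    [IsScalarTower (ZMod p) Ω V] (ψ : V →+ V) (hψ : ∀ (a : Ω) (v : V), ψ (a • v) = a ^ p • ψ v)
    {w : ι → V} (hw : ∀ i, ψ (w i) = w i) (hli : LinearIndependent (ZMod p) w) :
    LinearIndependent Ω w := by
  classical
  rw [linearIndependent_iff']
  intro s
  induction s using Finset.strongInduction with
  | _ s ih =>
  intro g hg i hi
  by_contra hgi
  set h : ι → Ω := fun j => (g i)⁻¹ * g j
  have hhi : h i = 1 := inv_mul_cancel₀ hgi
  have hrel : ∑ j ∈ s, h j • w j = 0 := by
    simp only [h, mul_smul, ← Finset.smul_sum, hg, smul_zero]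
  have hrel_frob : ∑ j ∈ s, h j ^ p • w j = 0 := by
    simpa [map_sum, hψ, hw] using congr_arg ψ hrel
  have hrel_diff : ∑ j ∈ s.erase i, (h j ^ p - h j) • w j = 0 := by
    rw [Finset.sum_erase _ (by simp [hhi])]
    simp only [sub_smul, Finset.sum_sub_distrib, hrel_frob, hrel, sub_zero]
  have hfix : ∀ j ∈ s, h j ^ p = h j := by
    intro j hj
    by_cases hji : j = i
    · rw [hji, hhi, one_pow]
    · exact sub_eq_zero.1
        (ih _ (Finset.erase_ssubset hi) _ hrel_diff j (Finset.mem_erase.2 ⟨hji, hj⟩))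
  choose! z hz using fun j hj => exists_algebraMap_eq_of_pow_eq_self (hfix j hj)
  have hrel_zmod : ∑ j ∈ s, z j • w j = 0 := by
    rw [← hrel]
    refine Finset.sum_congr rfl fun j hj => ?_
    rw [← hz j hj, algebraMap_smul]
  have hzi := linearIndependent_iff'.1 hli s z hrel_zmod i hi
  simp [← hz i hi, hzi] at hhi

theorem finrank_frobeniusFixedPoints_le_finrank {p : ℕ} [Fact p.Prime] {Ω V : Type*} [Field Ω]
    [CharP Ω p] [Algebra (ZMod p) Ω] [AddCommGroup V] [Module Ω V] [Module.Finite Ω V]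
    [Module (ZMod p) V] [IsScalarTower (ZMod p) Ω V] (ψ : V → V)
    (hadd : ∀ x y : V, ψ (x + y) = ψ x + ψ y)
    (hsmul : ∀ (a : Ω) (v : V), ψ (a • v) = a ^ p • ψ v) :
    FiniteDimensional (ZMod p) (frobeniusFixedPoints ψ hadd hsmul) ∧
      Module.finrank (ZMod p) (frobeniusFixedPoints ψ hadd hsmul) ≤ Module.finrank Ω V := by
  set W := frobeniusFixedPoints ψ hadd hsmul
  let b := Module.Basis.ofVectorSpace (ZMod p) W
  have hli : LinearIndependent Ω (W.subtype ∘ b) :=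
    (b.linearIndependent.map' W.subtype W.ker_subtype).of_frobenius_fixed
      (AddMonoidHom.mk' ψ hadd) hsmul fun i => (b i).2
  have : Finite (Module.Basis.ofVectorSpaceIndex (ZMod p) W) := hli.finite
  have : Fintype (Module.Basis.ofVectorSpaceIndex (ZMod p) W) := Fintype.ofFinite _
  refine ⟨Module.Finite.of_basis b, ?_⟩
  rw [Module.finrank_eq_card_basis b]
  exact hli.fintype_card_le_finrank

open TensorProduct in
theorem finrank_baseChange_le_spanFinrank {R Ω M : Type*} [CommRing R] [Field Ω] [Algebra R Ω]
    [AddCommGroup M] [Module R M] [Module.Finite R M] :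
    Module.finrank Ω (Ω ⊗[R] M) ≤ (⊤ : Submodule R M).spanFinrank := by
  rw [Module.finrank_eq_spanFinrank_of_free, ← Submodule.baseChange_top]
  exact Submodule.FG.spanFinrank_baseChange_le _ Module.Finite.fg_top

theorem Submodule.restrictScalars_span_of_forall_smul {k R Q : Type*} [Semiring k] [Semiring R]
    [AddCommMonoid Q] [Module k Q] [Module R Q] [SMul k R] [IsScalarTower k R Q]
    (h : ∀ (r : R) (q : Q), ∃ c : k, r • q = c • q) (s : Set Q) :
    (span R s).restrictScalars k = span k s := by
  refine le_antisymm (fun q hq => ?_) (span_le_restrictScalars k R s)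
  induction hq using span_induction with
  | mem q hq => exact subset_span hq
  | zero => exact zero_mem _
  | add _ _ _ _ hq hq' => exact add_mem hq hq'
  | smul r q _ hq =>
    obtain ⟨c, hc⟩ := h r q
    rw [hc]
    exact smul_mem _ c hq

namespace PowerSeries

variable {k M : Type*} [Field k] [AddCommGroup M] [Module k⟦X⟧ M] [Module k M]
  [IsScalarTower k k⟦X⟧ M]

theorem smul_eq_constantCoeff_smul (r : k⟦X⟧) (q : M ⧸ ((X : k⟦X⟧) • ⊤ : Submodule k⟦X⟧ M)) :
    r • q = constantCoeff r • q := by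
  induction q using Submodule.Quotient.induction_on with
  | H m =>
  obtain ⟨r', hr'⟩ : X ∣ r - algebraMap k k⟦X⟧ (constantCoeff r) := X_dvd_iff.2 (by simp)
  rw [← Submodule.Quotient.mk_smul, ← Submodule.Quotient.mk_smul, Submodule.Quotient.eq,
    ← algebraMap_smul k⟦X⟧ (constantCoeff r), ← sub_smul, hr', mul_smul]
  exact Submodule.smul_mem_pointwise_smul _ _ _ Submodule.mem_top

theorem restrictScalars_span_quotient_X_smul
    (s : Set (M ⧸ ((X : k⟦X⟧) • ⊤ : Submodule k⟦X⟧ M))) :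
    (Submodule.span k⟦X⟧ s).restrictScalars k = Submodule.span k s :=
  Submodule.restrictScalars_span_of_forall_smul
    (fun r q => ⟨_, smul_eq_constantCoeff_smul r q⟩) s

instance finite_quotient_X_smul [Module.Finite k⟦X⟧ M] :
    Module.Finite k (M ⧸ ((X : k⟦X⟧) • ⊤ : Submodule k⟦X⟧ M)) := by
  obtain ⟨t, ht⟩ := Module.Finite.fg_top (R := k⟦X⟧) (M := M ⧸ ((X : k⟦X⟧) • ⊤ : Submodule k⟦X⟧ M))
  exact ⟨⟨t, by rw [← restrictScalars_span_quotient_X_smul, ht, Submodule.restrictScalars_top]⟩⟩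

theorem spanFinrank_top_le_finrank_quotient_X_smul [Module.Finite k⟦X⟧ M] :
    (⊤ : Submodule k⟦X⟧ M).spanFinrank ≤
      Module.finrank k (M ⧸ ((X : k⟦X⟧) • ⊤ : Submodule k⟦X⟧ M)) := by
  set N : Submodule k⟦X⟧ M := (X : k⟦X⟧) • ⊤
  let b := Module.finBasis k (M ⧸ N)
  choose b' hb' using fun i => N.mkQ_surjective (b i)
  have hspan : Submodule.span k⟦X⟧ (Set.range b') = ⊤ := by
    rw [← IsLocalRing.map_mkQ_eq_top, maximalIdeal_eq_span_X, Submodule.ideal_span_singleton_smul,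
      Submodule.map_span, ← Set.range_comp, show N.mkQ ∘ b' = b from funext hb',
      ← Submodule.restrictScalars_eq_top_iff k, restrictScalars_span_quotient_X_smul, b.span_eq]
  calc (⊤ : Submodule k⟦X⟧ M).spanFinrank
      = (Submodule.span k⟦X⟧ (Set.range b')).spanFinrank := by rw [hspan]
    _ ≤ (Set.range b').ncard := Submodule.spanFinrank_span_le_ncard_of_finite (Set.finite_range _)
    _ ≤ Nat.card (Fin _) := by rw [← Nat.card_coe_set_eq]; exact Finite.card_range_le _
    _ = _ := Nat.card_fin _

end PowerSeries

theorem finrank_frobenius_fixed_points_le_general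
    {p : ℕ} [Fact p.Prime]
    {k : Type*} [Field k]
    {Ω : Type*} [Field Ω] [CharP Ω p] [Algebra (ZMod p) Ω]
    [Algebra (PowerSeries k) Ω]
    {M : Type*} [AddCommGroup M] [Module (PowerSeries k) M]
    [Module k M] [IsScalarTower k (PowerSeries k) M]
    [Module.Finite (PowerSeries k) M]
    [Module (ZMod p) (TensorProduct (PowerSeries k) Ω M)]
    [IsScalarTower (ZMod p) Ω (TensorProduct (PowerSeries k) Ω M)]
    (ψ : TensorProduct (PowerSeries k) Ω M → TensorProduct (PowerSeries k) Ω M)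
    (hadd : ∀ x y, ψ (x + y) = ψ x + ψ y)
    (hsmul : ∀ (a : Ω) (v : TensorProduct (PowerSeries k) Ω M), ψ (a • v) = a ^ p • ψ v) :
    FiniteDimensional (ZMod p) (frobeniusFixedPoints (Ω := Ω) ψ hadd hsmul) ∧
      Module.finrank (ZMod p) (frobeniusFixedPoints (Ω := Ω) ψ hadd hsmul) ≤
        Module.finrank k
          (M ⧸ ((PowerSeries.X : PowerSeries k) • ⊤ : Submodule (PowerSeries k) M)) := by
  obtain ⟨hfin, hle⟩ := finrank_frobeniusFixedPoints_le_finrank ψ hadd hsmul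
  exact ⟨hfin, hle.trans <| finrank_baseChange_le_spanFinrank.trans
    PowerSeries.spanFinrank_top_le_finrank_quotient_X_smul⟩

/-- Let `p` be a prime, `k` a field of characteristic `p`, `R = k⟦u⟧`, and `Ω`
a field of characteristic `p` containing the Laurent series field `k((u))` as a subfield.  Let
`M` be a finitely generated `R`-module, `V = Ω ⊗_R M`, and `ψ : V → V` any
Frobenius-semilinear map.  Then the fixed points `V^{ψ=1}` form a finite-dimensional
`𝔽ₚ`-vector space with `dim_{𝔽ₚ} V^{ψ=1} ≤ dim_k (M/uM)`. -/
theorem finrank_frobenius_fixed_points_le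
    {p : ℕ} [Fact p.Prime]
    {k : Type*} [Field k] [CharP k p]
    {Ω : Type*} [Field Ω] [CharP Ω p] [Algebra (ZMod p) Ω]
    [Algebra (LaurentSeries k) Ω]
    [Algebra (PowerSeries k) Ω] [IsScalarTower (PowerSeries k) (LaurentSeries k) Ω]
    {M : Type*} [AddCommGroup M] [Module (PowerSeries k) M]
    [Module k M] [IsScalarTower k (PowerSeries k) M]
    [Module.Finite (PowerSeries k) M]
    [Module (ZMod p) (TensorProduct (PowerSeries k) Ω M)]
    [IsScalarTower (ZMod p) Ω (TensorProduct (PowerSeries k) Ω M)]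
    (ψ : TensorProduct (PowerSeries k) Ω M → TensorProduct (PowerSeries k) Ω M)
    (hadd : ∀ x y, ψ (x + y) = ψ x + ψ y)
    (hsmul : ∀ (a : Ω) (v : TensorProduct (PowerSeries k) Ω M), ψ (a • v) = a ^ p • ψ v) :
    FiniteDimensional (ZMod p) (frobeniusFixedPoints (Ω := Ω) ψ hadd hsmul) ∧
      Module.finrank (ZMod p) (frobeniusFixedPoints (Ω := Ω) ψ hadd hsmul) ≤
        Module.finrank k
          (M ⧸ ((PowerSeries.X : PowerSeries k) • ⊤ : Submodule (PowerSeries k) M)) :=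
  finrank_frobenius_fixed_points_le_general ψ hadd hsmul
end
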